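/- Generalized CTW node-weighting lemma: for each node n at depth d of the depth-D context tree, P^n_w(bits routed to n | a_{1:t}) = ∑_{M ∈ C_{D−d}} 2^{−Γ_{D−d}(M)} ∏_{l ∈ L(M)} Pr_kt(bits routed to the context-tree node with path p(n)p(l)). -/

import Mathlib

/-- KT conditional probability of the next bit. -/
noncomputable def ktCond (a b : ℕ) (y : Bool) : ℝ :=
  if y then ((b : ℝ) + 1/2) / ((a : ℝ) + (b : ℝ) + 1)
  else ((a : ℝ) + 1/2) / ((a : ℝ) + (b : ℝ) + 1)

noncomputable def ktBlockAux : ℕ → ℕ → List Bool → ℝ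
  | _, _, [] => 1
  | a, b, y :: ys =>
      ktCond a b y * ktBlockAux (if y then a else a + 1) (if y then b + 1 else b) ys

/-- KT block probability `Pr_kt`. -/
noncomputable def ktBlock (s : List Bool) : ℝ := ktBlockAux 0 0 s

/-- A model of a prediction suffix tree. -/
inductive BinTree where
  | leaf : BinTree
  | node : BinTree → BinTree → BinTree
deriving DecidableEq

namespace BinTree

def depth : BinTree → ℕ
  | leaf => 0
  | node l r => max l.depth r.depth + 1

def numNodes : BinTree → ℕ
  | leaf => 1
  | node l r => l.numNodes + r.numNodes + 1

def leavesAt : ℕ → BinTree → ℕ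
  | 0, leaf => 1
  | 0, node _ _ => 0
  | _ + 1, leaf => 0
  | d + 1, node l r => leavesAt d l + leavesAt d r

/-- `Γ_D(M)`: nodes of `M` minus leaves of `M` at depth `D`. -/
def cost (D : ℕ) (M : BinTree) : ℕ := M.numNodes - leavesAt D M

end BinTree

/- `rt s` denotes the subsequence of the bits of `x_{1:t}` routed (by the
action-conditional context of `a_{1:t}` and `x_{1:t}`) to the context-tree node
with path description `s`. -/

/-- The CTW weighted probability `P^n_w` at a node with path `s` and remaining
depth `k`: `P^n_w = Pr_kt` at leaves, and
`P^n_w = ½·Pr_kt + ½·P^{n_l}_w·P^{n_r}_w` at internal nodes. -/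
noncomputable def Pw (rt : List Bool → List Bool) : ℕ → List Bool → ℝ
  | 0, s => ktBlock (rt s)
  | k + 1, s =>
      (1/2) * ktBlock (rt s) +
        (1/2) * (Pw rt k (s ++ [true]) * Pw rt k (s ++ [false]))

/-- `Pr(x_{1:t} | M, a_{1:t})` for a tree model `M` rooted at path `s`:
the product over the leaves `l` of `M` of the KT block probabilities of the
bits routed to the node with path `p(s)p(l)`. -/
noncomputable def modelProb (rt : List Bool → List Bool) : BinTree → List Bool → ℝ
  | .leaf, s => ktBlock (rt s)
  | .node l r, s => modelProb rt l (s ++ [true]) * modelProb rt r (s ++ [false])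

/-! Induction on the remaining depth `k`. A tree of depth at most `k + 1` is either a leaf, of
cost `1` and hence weight `½ · Pr_kt`, or a root joining two trees of depth at most `k`, whose cost
is the sum of theirs plus one. So the sum over the joined trees factors as `½` times the product of
the two subtree mixtures, which is the CTW recursion for `P_w`; the terms are nonnegative, so the
product of the two series converges. -/

lemma ktBlockAux_nonneg : ∀ (a b : ℕ) (ys : List Bool), 0 ≤ ktBlockAux a b ys
  | _, _, [] => zero_le_one
  | _, _, _ :: ys => by
    refine mul_nonneg ?_ (ktBlockAux_nonneg _ _ ys)
    unfold ktCond
    split <;> positivity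

lemma ktBlock_nonneg (s : List Bool) : 0 ≤ ktBlock s := ktBlockAux_nonneg 0 0 s

lemma modelProb_nonneg (rt : List Bool → List Bool) :
    ∀ (M : BinTree) (s : List Bool), 0 ≤ modelProb rt M s
  | .leaf, _ => ktBlock_nonneg _
  | .node l r, _ => mul_nonneg (modelProb_nonneg rt l _) (modelProb_nonneg rt r _)

lemma HasSum.mul_of_nonneg {ι κ : Type*} {f : ι → ℝ} {g : κ → ℝ} {a b : ℝ}
    (hf : HasSum f a) (hg : HasSum g b) (hf₀ : 0 ≤ f) (hg₀ : 0 ≤ g) :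
    HasSum (fun x : ι × κ => f x.1 * g x.2) (a * b) :=
  hf.mul hg (hf.summable.mul_of_nonneg hg.summable hf₀ hg₀)

namespace BinTree

lemma leavesAt_le_numNodes : ∀ (d : ℕ) (M : BinTree), M.leavesAt d ≤ M.numNodes
  | 0, leaf => le_rfl
  | 0, node _ _ => Nat.zero_le _
  | _ + 1, leaf => Nat.zero_le _
  | d + 1, node l r => by
    have := leavesAt_le_numNodes d l
    have := leavesAt_le_numNodes d r
    simp only [leavesAt, numNodes]
    omega

lemma cost_succ_leaf (k : ℕ) : cost (k + 1) leaf = 1 := rfl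

lemma cost_succ_node (k : ℕ) (l r : BinTree) :
    cost (k + 1) (node l r) = cost k l + cost k r + 1 := by
  have := leavesAt_le_numNodes k l
  have := leavesAt_le_numNodes k r
  simp only [cost, numNodes, leavesAt]
  omega

lemma eq_leaf_of_depth_eq_zero : ∀ {M : BinTree}, M.depth = 0 → M = leaf
  | leaf, _ => rfl

def depthLeSuccEquiv (k : ℕ) :
    Unit ⊕ ({M : BinTree // M.depth ≤ k} × {M : BinTree // M.depth ≤ k}) ≃
      {M : BinTree // M.depth ≤ k + 1} where
  toFun
    | .inl _ => ⟨leaf, Nat.zero_le _⟩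
    | .inr (l, r) => ⟨node l r, Nat.succ_le_succ (max_le l.2 r.2)⟩
  invFun
    | ⟨leaf, _⟩ => .inl ()
    | ⟨node l r, h⟩ =>
      .inr (⟨l, (le_max_left _ _).trans (Nat.le_of_succ_le_succ h)⟩,
        ⟨r, (le_max_right _ _).trans (Nat.le_of_succ_le_succ h)⟩)
  left_inv
    | .inl _ => rfl
    | .inr _ => rfl
  right_inv
    | ⟨leaf, _⟩ => rfl
    | ⟨node _ _, _⟩ => rfl

end BinTree

open BinTree

lemma weighted_modelProb_node (rt : List Bool → List Bool) (k : ℕ) (l r : BinTree)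
    (s : List Bool) :
    (2 : ℝ) ^ (-(cost (k + 1) (node l r) : ℤ)) * modelProb rt (node l r) s =
      1 / 2 * ((2 : ℝ) ^ (-(cost k l : ℤ)) * modelProb rt l (s ++ [true]) *
        ((2 : ℝ) ^ (-(cost k r : ℤ)) * modelProb rt r (s ++ [false]))) := by
  rw [cost_succ_node, modelProb]
  push_cast
  rw [neg_add, neg_add, zpow_add₀ two_ne_zero, zpow_add₀ two_ne_zero]
  ring

theorem hasSum_Pw (rt : List Bool → List Bool) (k : ℕ) (s : List Bool) :
    HasSum
      (fun M : {M : BinTree // M.depth ≤ k} =>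
        (2 : ℝ) ^ (-(cost k M.1 : ℤ)) * modelProb rt M.1 s)
      (Pw rt k s) := by
  induction k generalizing s with
  | zero =>
    convert hasSum_single (⟨leaf, le_rfl⟩ : {M : BinTree // M.depth ≤ 0})
      fun M hM => absurd (Subtype.ext (eq_leaf_of_depth_eq_zero (Nat.le_zero.mp M.2))) hM
    simp [cost, numNodes, leavesAt, modelProb, Pw]
  | succ k ih =>
    rw [← (depthLeSuccEquiv k).hasSum_iff, Pw]
    refine HasSum.sum ?_ ?_
    · simp only [Function.comp_def, depthLeSuccEquiv, Equiv.coe_fn_mk, cost_succ_leaf,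
        modelProb, Nat.cast_one, zpow_neg_one, one_div]
      exact hasSum_unique _
    · have hprod := ((ih (s ++ [true])).mul_of_nonneg (ih (s ++ [false]))
        (fun _ => mul_nonneg (by positivity) (modelProb_nonneg rt _ _))
        (fun _ => mul_nonneg (by positivity) (modelProb_nonneg rt _ _))).mul_left (1 / 2)
      simpa only [Function.comp_def, depthLeSuccEquiv, Equiv.coe_fn_mk,
        weighted_modelProb_node] using hprod

theorem ctw_node_mixture_general (rt : List Bool → List Bool) (D d : ℕ)
    (s : List Bool) :
    HasSum
      (fun M : {M : BinTree // M.depth ≤ D - d} =>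
        (2 : ℝ) ^ (-(BinTree.cost (D - d) M.1 : ℤ)) * modelProb rt M.1 s)
      (Pw rt (D - d) s) :=
  hasSum_Pw rt (D - d) s

/-- generalized node-weighting lemma: for each node `n` at depth
`d` (path description `s ∈ {0,1}^d`) of the depth-`D` context tree,
`P^n_w(bits routed to n | a_{1:t}) = ∑_{M ∈ C_{D−d}} 2^{−Γ_{D−d}(M)}
∏_{l ∈ L(M)} Pr_kt(bits routed to the node with path p(n)p(l))`. -/
theorem ctw_node_mixture (rt : List Bool → List Bool) (D d : ℕ) (hd : d ≤ D)
    (s : List Bool) (hs : s.length = d) :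
    HasSum
      (fun M : {M : BinTree // M.depth ≤ D - d} =>
        (2 : ℝ) ^ (-(BinTree.cost (D - d) M.1 : ℤ)) * modelProb rt M.1 s)
      (Pw rt (D - d) s) :=
  ctw_node_mixture_general rt D d s
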